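/- arXiv:1609.08370 — 4 statements merged into one kernel-verified Lean document; each statement's English description precedes it below -/
import Mathlib

section
/- For any cograph G and any graph H, the domination number of the Cartesian product G □ H is at least γ(G)·γ(H). -/
open SimpleGraph

/-- `S` is a dominating set of `G`. -/
def IsDomSet {V : Type*} (G : SimpleGraph V) (S : Set V) : Prop :=
  ∀ v : V, v ∈ S ∨ ∃ u ∈ S, G.Adj u v

/-- The domination number of a finite graph. -/
noncomputable def domNum {V : Type*} [Fintype V] (G : SimpleGraph V) : ℕ :=
  sInf {n | ∃ S : Finset V, IsDomSet G ↑S ∧ S.card = n}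

/-- `Γ` is a minimum dominating set of `G`. -/
def IsMinDomSet {V : Type*} [Fintype V] (G : SimpleGraph V) (Γ : Finset V) : Prop :=
  IsDomSet G ↑Γ ∧ Γ.card = domNum G

/-- `G` is a cograph: it has no induced `P₄`. -/
def IsCograph {V : Type*} (G : SimpleGraph V) : Prop :=
  ¬ ∃ f : Fin 4 ↪ V, ∀ a b : Fin 4, (pathGraph 4).Adj a b ↔ G.Adj (f a) (f b)

/-- `w` is a private neighbor of `v` with respect to `Γ`. -/
def PrivNbr {V : Type*} (G : SimpleGraph V) (Γ : Set V) (v w : V) : Prop :=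
  w ∉ Γ ∧ G.Adj v w ∧ ∀ u ∈ Γ, G.Adj u w → u = v

/-- `w` is a shared neighbor of exactly `v₁` and `v₂` within `Γ`. -/
def SharedNbr {V : Type*} (G : SimpleGraph V) (Γ : Set V) (v₁ v₂ w : V) : Prop :=
  w ∉ Γ ∧ ∀ u ∈ Γ, G.Adj u w ↔ (u = v₁ ∨ u = v₂)

/-!
Let `D` be a minimum dominating set of `G □ H`; we count its vertices over one connected
component `C` of `G` at a time. For `S ⊆ C`, the columns `w` in which the row of `D` meets `S`
or dominates all of `S` form a dominating set of `H`. If `C` has a universal vertex `c`, taking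
`S = {c}` shows that `D` has at least `γ(H)` vertices over `C`. Otherwise, a maximum clique `P`
of `C` and its complement `C \ P` each contain a non-neighbour of every vertex of the other, so
no single vertex of a row serves both; hence `D` has at least `2 γ(H)` vertices over `C`, while
`P₄`-freeness makes `C` dominated by two vertices. Summing over the components gives the bound.
-/

open Finset Classical

section Domination
variable {V : Type*} [Fintype V] {G : SimpleGraph V}

lemma domNum_le {S : Finset V} (h : IsDomSet G S) : domNum G ≤ #S :=
  Nat.sInf_le ⟨S, h, rfl⟩

lemma exists_isDomSet_card_eq_domNum (G : SimpleGraph V) :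
    ∃ S : Finset V, IsDomSet G S ∧ #S = domNum G :=
  Nat.sInf_mem (s := {n | ∃ S : Finset V, IsDomSet G S ∧ #S = n})
    ⟨_, univ, fun v => Or.inl (mem_coe.2 (mem_univ v)), rfl⟩

end Domination

namespace IsCograph
variable {V : Type*} {G : SimpleGraph V}

theorem false_of_induced_path (hG : IsCograph G) {a b c d : V}
    (hab : G.Adj a b) (hbc : G.Adj b c) (hcd : G.Adj c d)
    (hac : ¬ G.Adj a c) (had : ¬ G.Adj a d) (hbd : ¬ G.Adj b d) : False := by
  have hac' : a ≠ c := by rintro rfl; exact had hcd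
  have had' : a ≠ d := by rintro rfl; exact hac hcd.symm
  have hbd' : b ≠ d := by rintro rfl; exact had hab
  have hinj : Function.Injective ![a, b, c, d] := by
    intro i j hij
    fin_cases i <;> fin_cases j <;> simp_all [G.ne_of_adj hab, G.ne_of_adj hbc, G.ne_of_adj hcd,
      (G.ne_of_adj hab).symm, (G.ne_of_adj hbc).symm, (G.ne_of_adj hcd).symm, hac'.symm,
      had'.symm, hbd'.symm]
  refine hG ⟨⟨_, hinj⟩, fun i j => ?_⟩
  change (pathGraph 4).Adj i j ↔ G.Adj (![a, b, c, d] i) (![a, b, c, d] j)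
  fin_cases i <;> fin_cases j <;> simp [pathGraph_adj, hab, hbc, hcd, hab.symm, hbc.symm,
      hcd.symm, hac, had, hbd, G.adj_comm c a, G.adj_comm d a, G.adj_comm d b]

theorem eq_or_adj_or_exists_of_reachable (hG : IsCograph G) {a v : V} (h : G.Reachable a v) :
    v = a ∨ G.Adj a v ∨ ∃ x, G.Adj a x ∧ G.Adj x v := by
  obtain ⟨p⟩ := h
  induction p with
  | nil => exact Or.inl rfl
  | @cons a b v hab p ih =>
    rcases ih with rfl | hbv | ⟨x, hbx, hxv⟩
    · exact Or.inr (Or.inl hab)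
    · exact Or.inr (Or.inr ⟨b, hab, hbv⟩)
    · by_contra! hcon
      by_cases hbv : G.Adj b v
      · exact hcon.2.2 b hab hbv
      · exact hG.false_of_induced_path hab hbx hxv (fun hax => hcon.2.2 x hax hxv) hcon.2.1 hbv

/-- Otherwise one of `a - b - r - v`, `r - b - b' - v`, `r - b - a - b'` is an induced path. -/
theorem adj_of_adj_of_not_adj (hG : IsCograph G) {a b b' v r : V}
    (hab : G.Adj a b) (hab' : G.Adj a b') (hb'v : G.Adj b' v) (hav : ¬ G.Adj a v)
    (hbv : ¬ G.Adj b v) (hbr : G.Adj b r) (har : ¬ G.Adj a r) : G.Adj b' r := by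
  by_contra hb'r
  by_cases hbb' : G.Adj b b'
  · by_cases hrv : G.Adj r v
    · exact hG.false_of_induced_path hab hbr hrv har hav hbv
    · exact hG.false_of_induced_path hbr.symm hbb' hb'v (fun h => hb'r h.symm) hrv hbv
  · exact hG.false_of_induced_path hbr.symm hab.symm hab' (fun h => har h.symm)
      (fun h => hb'r h.symm) hbb'

/-- Take `b` to be a neighbour of `a` with the most neighbours among the non-neighbours of `a`:
a vertex of the component missed by `a` and `b` would give a neighbour `b'` of `a` beating `b`. -/
theorem exists_dominating_pair [Fintype V] (hG : IsCograph G) (a : V) :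
    ∃ b, ∀ v, G.Reachable a v → v = a ∨ G.Adj a v ∨ v = b ∨ G.Adj b v := by
  by_cases hN : ∃ x, G.Adj a x
  · obtain ⟨x, hax⟩ := hN
    obtain ⟨b, hb, hmax⟩ := exists_max_image {x | G.Adj a x}
      (fun x => #{r | ¬ G.Adj a r ∧ G.Adj x r}) ⟨x, by simpa using hax⟩
    rw [mem_filter] at hb
    refine ⟨b, fun v hv => ?_⟩
    rcases hG.eq_or_adj_or_exists_of_reachable hv with h | h | ⟨b', hab', hb'v⟩
    · exact Or.inl h
    · exact Or.inr (Or.inl h)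
    by_contra! hcon
    have hlt : #{r | ¬ G.Adj a r ∧ G.Adj b r} < #{r | ¬ G.Adj a r ∧ G.Adj b' r} := by
      refine card_lt_card ⟨fun r hr => ?_, fun hsub => hcon.2.2.2 ?_⟩
      · simp only [mem_filter, mem_univ, true_and] at hr ⊢
        exact ⟨hr.1, hG.adj_of_adj_of_not_adj hb.2 hab' hb'v hcon.2.1 hcon.2.2.2 hr.2 hr.1⟩
      · exact (mem_filter.1 (hsub (mem_filter.2 ⟨mem_univ v, hcon.2.1, hb'v⟩))).2.2
    exact hlt.not_ge (hmax b' (by simpa using hab'))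
  · push Not at hN
    refine ⟨a, fun v hv => ?_⟩
    rcases hG.eq_or_adj_or_exists_of_reachable hv with h | h | ⟨x, hx, _⟩
    · exact Or.inl h
    · exact absurd h (hN v)
    · exact absurd hx (hN x)

end IsCograph

section MeetsOrDominates
variable {V : Type*} {G : SimpleGraph V}

def MeetsOrDominates (G : SimpleGraph V) (E S : Finset V) : Prop :=
  (∃ u ∈ S, u ∈ E) ∨ ∀ u ∈ S, ∃ x ∈ E, G.Adj x u

lemma MeetsOrDominates.nonempty {E S : Finset V} (h : MeetsOrDominates G E S)
    (hS : S.Nonempty) : E.Nonempty := by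
  obtain ⟨u, hu⟩ := hS
  rcases h with ⟨x, -, hx⟩ | h
  · exact ⟨x, hx⟩
  · obtain ⟨x, hx, -⟩ := h u hu
    exact ⟨x, hx⟩

lemma meetsOrDominates_singleton {x : V} {S : Finset V} :
    MeetsOrDominates G {x} S ↔ x ∈ S ∨ ∀ u ∈ S, G.Adj x u := by
  simp [MeetsOrDominates]

lemma MeetsOrDominates.filter_connectedComponentMk {E S : Finset V} {C : G.ConnectedComponent}
    (h : MeetsOrDominates G E S) (hS : ∀ u ∈ S, G.connectedComponentMk u = C) :
    MeetsOrDominates G {x ∈ E | G.connectedComponentMk x = C} S := by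
  rcases h with ⟨u, hu, huE⟩ | h
  · exact Or.inl ⟨u, hu, mem_filter.2 ⟨huE, hS u hu⟩⟩
  · refine Or.inr fun u hu => ?_
    obtain ⟨x, hx, hxu⟩ := h u hu
    exact ⟨x, mem_filter.2 ⟨hx, (ConnectedComponent.connectedComponentMk_eq_of_adj hxu).trans
      (hS u hu)⟩, hxu⟩

lemma card_filter_meetsOrDominates_singleton_le {S E : Finset V} (hS : S.Nonempty) :
    #{T ∈ ({S} : Finset (Finset V)) | MeetsOrDominates G E T} ≤ #E := by
  rw [filter_singleton]
  split_ifs with h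
  · exact card_pos.2 (h.nonempty hS)
  · simp

/-- A single vertex `x` of a row cannot serve both `P` and `T \ P`: the side containing `x` would
need to be met, and the other side would need to be dominated by `x`. -/
lemma card_filter_meetsOrDominates_pair_le {P T E : Finset V} (hP : P.Nonempty)
    (hPQ : ∀ x ∈ P, ∃ y ∈ T \ P, ¬ G.Adj x y) (hQP : ∀ y ∈ T \ P, ∃ x ∈ P, ¬ G.Adj y x)
    (hE : E ⊆ T) :
    #{S ∈ ({P, T \ P} : Finset (Finset V)) | MeetsOrDominates G E S} ≤ #E := by
  have hQ : (T \ P).Nonempty := by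
    obtain ⟨x, hx⟩ := hP
    obtain ⟨y, hy, -⟩ := hPQ x hx
    exact ⟨y, hy⟩
  by_cases h₁ : MeetsOrDominates G E P <;> by_cases h₂ : MeetsOrDominates G E (T \ P) <;>
    simp only [filter_insert, filter_singleton, h₁, h₂, if_true, if_false]
  · refine card_le_two.trans ?_
    by_contra! hlt
    have hpos := card_pos.2 (h₁.nonempty hP)
    obtain ⟨x, rfl⟩ := card_eq_one.1 (by omega : #E = 1)
    rw [meetsOrDominates_singleton] at h₁ h₂
    by_cases hxP : x ∈ P
    · obtain ⟨y, hy, hxy⟩ := hPQ x hxP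
      exact hxy (h₂.resolve_left (fun h => (mem_sdiff.1 h).2 hxP) y hy)
    · obtain ⟨y, hy, hxy⟩ := hQP x (mem_sdiff.2 ⟨hE (mem_singleton_self x), hxP⟩)
      exact hxy (h₁.resolve_left hxP y hy)
  · exact card_pos.2 (h₁.nonempty hP)
  · exact card_pos.2 (h₂.nonempty hQ)
  · simp

/-- Take `P` to be a clique of maximum size in `T`. -/
lemma exists_subset_nonadj_compl {T : Finset V} (hT : T.Nonempty)
    (hT' : ∀ x ∈ T, ∃ y ∈ T, x ≠ y ∧ ¬ G.Adj x y) :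
    ∃ P ⊆ T, P.Nonempty ∧ (∀ x ∈ P, ∃ y ∈ T \ P, ¬ G.Adj x y) ∧
      ∀ y ∈ T \ P, ∃ x ∈ P, ¬ G.Adj y x := by
  obtain ⟨t, ht⟩ := hT
  obtain ⟨P, hP, hmax⟩ :=
    exists_max_image (T.powerset.filter fun P : Finset V => G.IsClique (P : Set V)) card
      ⟨{t}, by simpa using ht⟩
  obtain ⟨hPT, hPcl⟩ := mem_filter.1 hP
  rw [mem_powerset] at hPT
  refine ⟨P, hPT, card_pos.1 ?_, fun x hx => ?_, fun y hy => ?_⟩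
  · simpa using hmax {t} (by simpa using ht)
  · obtain ⟨y, hyT, hxy, hnadj⟩ := hT' x (hPT hx)
    exact ⟨y, mem_sdiff.2 ⟨hyT, fun hyP => hnadj (hPcl hx hyP hxy)⟩, hnadj⟩
  · obtain ⟨hyT, hyP⟩ := mem_sdiff.1 hy
    by_contra! hall
    have hcl : G.IsClique (insert y P : Finset V) := by
      rw [coe_insert]
      exact hPcl.insert fun b hb _ => hall b hb
    have := hmax (insert y P) (mem_filter.2 ⟨mem_powerset.2 (insert_subset hyT hPT), hcl⟩)
    rw [card_insert_of_notMem hyP] at this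
    omega

end MeetsOrDominates

section Columns
variable {V W : Type*} {G : SimpleGraph V} {H : SimpleGraph W}

noncomputable def row (D : Finset (V × W)) (w : W) : Finset V :=
  {p ∈ D | p.2 = w}.image Prod.fst

@[simp]
lemma mem_row {D : Finset (V × W)} {w : W} {v : V} : v ∈ row D w ↔ (v, w) ∈ D := by
  simp [row]

lemma row_filter (D : Finset (V × W)) (q : V → Prop) [DecidablePred q] (w : W) :
    row {p ∈ D | q p.1} w = {v ∈ row D w | q v} := by
  ext v
  simp [and_comm]

lemma sum_card_row [Fintype W] (D : Finset (V × W)) : ∑ w, #(row D w) = #D := by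
  rw [card_eq_sum_card_fiberwise (f := Prod.snd) (t := univ) (by simp)]
  refine sum_congr rfl fun w _ => card_image_of_injOn ?_
  rintro ⟨v, w₁⟩ h₁ ⟨v', w₂⟩ h₂ (rfl : v = v')
  exact congrArg (Prod.mk v) ((mem_filter.1 h₁).2.trans (mem_filter.1 h₂).2.symm)

noncomputable def dominatedColumns [Fintype W] (G : SimpleGraph V) (D : Finset (V × W))
    (S : Finset V) : Finset W :=
  {w | MeetsOrDominates G (row D w) S}

/-- A vertex `(u, w)` with `u ∈ S` that no vertex of its row dominates must be dominated within
its column, from a row `w'` that meets `S`. -/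
lemma isDomSet_dominatedColumns [Fintype W] {D : Finset (V × W)}
    (hD : IsDomSet (G □ H) D) (S : Finset V) : IsDomSet H (dominatedColumns G D S) := by
  intro w
  by_cases hw : MeetsOrDominates G (row D w) S
  · exact Or.inl (by simpa [dominatedColumns] using hw)
  simp only [MeetsOrDominates, not_or, not_exists, not_and, not_forall] at hw
  obtain ⟨hmeet, u, hu, hdom⟩ := hw
  rcases hD (u, w) with huw | ⟨⟨x, w'⟩, hxw', hadj⟩
  · exact absurd (mem_row.2 huw) (hmeet u hu)
  rcases boxProd_adj.1 hadj with ⟨hxu, rfl⟩ | ⟨hw'w, rfl⟩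
  · exact absurd hxu (hdom x (mem_row.2 hxw'))
  · exact Or.inr ⟨w', mem_coe.2 (mem_filter.2 ⟨mem_univ _, Or.inl ⟨x, hu, mem_row.2 hxw'⟩⟩),
      hw'w⟩

lemma card_mul_domNum_le [Fintype W] {D : Finset (V × W)} (hD : IsDomSet (G □ H) D)
    (𝒮 : Finset (Finset V)) (D' : Finset (V × W))
    (h : ∀ w, #{S ∈ 𝒮 | MeetsOrDominates G (row D w) S} ≤ #(row D' w)) :
    #𝒮 * domNum H ≤ #D' :=
  calc #𝒮 * domNum H = ∑ S ∈ 𝒮, domNum H := by rw [sum_const, smul_eq_mul]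
    _ ≤ ∑ S ∈ 𝒮, #(dominatedColumns G D S) :=
      sum_le_sum fun S _ => domNum_le (isDomSet_dominatedColumns hD S)
    _ = ∑ w, #{S ∈ 𝒮 | MeetsOrDominates G (row D w) S} := by
      simpa [bipartiteAbove, bipartiteBelow, dominatedColumns] using
        sum_card_bipartiteAbove_eq_sum_card_bipartiteBelow
          (fun S w => MeetsOrDominates G (row D w) S) (s := 𝒮) (t := univ)
    _ ≤ ∑ w, #(row D' w) := sum_le_sum fun w _ => h w
    _ = #D' := sum_card_row D'

end Columns

lemma card_mul_domNum_le_card_filter_connectedComponentMk {V W : Type*} [Fintype W]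
    {G : SimpleGraph V} {H : SimpleGraph W} {D : Finset (V × W)} (hD : IsDomSet (G □ H) D)
    {C : G.ConnectedComponent} {𝒮 : Finset (Finset V)}
    (h𝒮C : ∀ S ∈ 𝒮, ∀ u ∈ S, G.connectedComponentMk u = C)
    (hcount : ∀ E : Finset V, (∀ x ∈ E, G.connectedComponentMk x = C) →
      #{S ∈ 𝒮 | MeetsOrDominates G E S} ≤ #E) :
    #𝒮 * domNum H ≤ #{p ∈ D | G.connectedComponentMk p.1 = C} := by
  refine card_mul_domNum_le hD 𝒮 _ fun w => ?_
  rw [row_filter D (G.connectedComponentMk · = C)]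
  refine (card_le_card (monotone_filter_right _ fun S hS h => ?_)).trans
    (hcount _ fun x hx => (mem_filter.1 hx).2)
  exact h.filter_connectedComponentMk (h𝒮C S hS)

theorem IsCograph.exists_dominating_card_le_card_family {V : Type*} [Fintype V]
    {G : SimpleGraph V} (hG : IsCograph G) (C : G.ConnectedComponent) :
    ∃ (A : Finset V) (𝒮 : Finset (Finset V)),
      (∀ v, G.connectedComponentMk v = C → v ∈ A ∨ ∃ a ∈ A, G.Adj a v) ∧ #A ≤ #𝒮 ∧
      (∀ S ∈ 𝒮, ∀ u ∈ S, G.connectedComponentMk u = C) ∧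
      ∀ E : Finset V, (∀ x ∈ E, G.connectedComponentMk x = C) →
        #{S ∈ 𝒮 | MeetsOrDominates G E S} ≤ #E := by
  by_cases huniv : ∃ c, G.connectedComponentMk c = C ∧
      ∀ v, G.connectedComponentMk v = C → v = c ∨ G.Adj c v
  · obtain ⟨c, hc, hcC⟩ := huniv
    refine ⟨{c}, {{c}}, fun v hv => ?_, le_rfl, by simpa using hc,
      fun E _ => card_filter_meetsOrDominates_singleton_le (singleton_nonempty c)⟩
    rcases hcC v hv with rfl | h
    · exact Or.inl (mem_singleton_self v)
    · exact Or.inr ⟨c, mem_singleton_self c, h⟩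
  push Not at huniv
  obtain ⟨a, rfl⟩ : ∃ a, G.connectedComponentMk a = C := C.nonempty_supp
  set T : Finset V := {v | G.connectedComponentMk v = G.connectedComponentMk a}
  obtain ⟨b, hb⟩ := hG.exists_dominating_pair a
  obtain ⟨P, hPT, hP, hPQ, hQP⟩ := exists_subset_nonadj_compl (G := G) (T := T) ⟨a, by simp [T]⟩
    fun x hx => by
      obtain ⟨v, hv, hvx, hxv⟩ := huniv x (mem_filter.1 hx).2
      exact ⟨v, by simpa [T] using hv, Ne.symm hvx, hxv⟩
  have hPQne : P ≠ T \ P := by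
    obtain ⟨x, hx⟩ := hP
    exact fun h => (mem_sdiff.1 (h ▸ hx)).2 hx
  refine ⟨{a, b}, {P, T \ P}, fun v hv => ?_, by rw [card_pair hPQne]; exact card_le_two,
    ?_, fun E hE => card_filter_meetsOrDominates_pair_le hP hPQ hQP
      fun x hx => by simpa [T] using hE x hx⟩
  · rcases hb v (ConnectedComponent.eq.1 hv.symm) with rfl | h | rfl | h <;> simp [*]
  · simp only [mem_insert, mem_singleton, forall_eq_or_imp, forall_eq]
    exact ⟨fun u hu => (mem_filter.1 (hPT hu)).2, fun u hu => (mem_filter.1 (mem_sdiff.1 hu).1).2⟩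

theorem cograph_vizing {V W : Type*} [Fintype V] [Fintype W]
    (G : SimpleGraph V) (H : SimpleGraph W) (hG : IsCograph G) :
    domNum (G.boxProd H) ≥ domNum G * domNum H := by
  obtain ⟨D, hD, hDcard⟩ := exists_isDomSet_card_eq_domNum (G □ H)
  choose A 𝒮 hAdom hA𝒮 h𝒮C hcount using hG.exists_dominating_card_le_card_family
  have hdom : IsDomSet G (univ.biUnion A : Finset V) := by
    intro v
    rcases hAdom _ v rfl with h | ⟨a, ha, hav⟩
    · exact Or.inl (mem_coe.2 (mem_biUnion.2 ⟨_, mem_univ _, h⟩))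
    · exact Or.inr ⟨a, mem_coe.2 (mem_biUnion.2 ⟨_, mem_univ _, ha⟩), hav⟩
  calc domNum G * domNum H ≤ (∑ C, #(A C)) * domNum H :=
        Nat.mul_le_mul_right _ ((domNum_le hdom).trans card_biUnion_le)
    _ ≤ ∑ C, #(𝒮 C) * domNum H := by
      rw [sum_mul]
      exact sum_le_sum fun C _ => Nat.mul_le_mul_right _ (hA𝒮 C)
    _ ≤ ∑ C, #{p ∈ D | G.connectedComponentMk p.1 = C} := sum_le_sum fun C _ =>
      card_mul_domNum_le_card_filter_connectedComponentMk hD (h𝒮C C) (hcount C)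
    _ = domNum (G □ H) := by
      rw [← hDcard, card_eq_sum_card_fiberwise (f := fun p => G.connectedComponentMk p.1)
        (t := univ) fun _ _ => mem_univ _]
end

section
/- Every cograph G satisfies γ_{[1,2]}(G) = γ(G); that is, G has a minimum dominating set S such that every vertex outside S has at most two neighbors in S. -/
open SimpleGraph

/-- In a cograph there is no (not necessarily induced-ordered) quadruple forming an
induced path `a - b - c - d`. -/
lemma p4_free {V : Type*} {G : SimpleGraph V} (hG : IsCograph G) {a b c d : V}
    (hab : G.Adj a b) (hbc : G.Adj b c) (hcd : G.Adj c d)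
    (hac : ¬G.Adj a c) (had : ¬G.Adj a d) (hbd : ¬G.Adj b d)
    (hadne : a ≠ d) : False := by
  have hab' : a ≠ b := hab.ne
  have hbc' : b ≠ c := hbc.ne
  have hcd' : c ≠ d := hcd.ne
  have hac' : a ≠ c := fun h => had (h ▸ hcd)
  have hbd' : b ≠ d := fun h => had (h ▸ hab)
  have hba := hab.symm
  have hcb := hbc.symm
  have hdc := hcd.symm
  have hca : ¬ G.Adj c a := fun h => hac h.symm
  have hda : ¬ G.Adj d a := fun h => had h.symm
  have hdb : ¬ G.Adj d b := fun h => hbd h.symm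
  apply hG
  refine ⟨⟨![a, b, c, d], ?_⟩, ?_⟩
  · intro i j hij
    fin_cases i <;> fin_cases j <;> simp_all
  · intro i j
    fin_cases i <;> fin_cases j <;> rw [pathGraph_adj] <;>
      first
        | exact iff_of_false (by decide) (G.irrefl)
        | exact iff_of_true (by decide) hab
        | exact iff_of_true (by decide) hba
        | exact iff_of_true (by decide) hbc
        | exact iff_of_true (by decide) hcb
        | exact iff_of_true (by decide) hcd
        | exact iff_of_true (by decide) hdc
        | exact iff_of_false (by decide) hac
        | exact iff_of_false (by decide) hca
        | exact iff_of_false (by decide) had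
        | exact iff_of_false (by decide) hda
        | exact iff_of_false (by decide) hbd
        | exact iff_of_false (by decide) hdb

/-- Every connected component of a cograph admits a dominating set of size at most two. -/
lemma comp_dom {V : Type*} [Fintype V] {G : SimpleGraph V} (hG : IsCograph G) (w : V) :
    ∃ D : Finset V, D.card ≤ 2 ∧ ∀ v, G.Reachable w v → (v ∈ D ∨ ∃ u ∈ D, G.Adj u v) := by
  classical
  have step : ∀ b c, G.Adj b c →
      (b = w ∨ G.Adj w b ∨ ∃ a, G.Adj w a ∧ G.Adj a b) →
      (c = w ∨ G.Adj w c ∨ ∃ a, G.Adj w a ∧ G.Adj a c) := by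
    intro b c hbc hb
    by_cases hc1 : c = w
    · exact Or.inl hc1
    by_cases hc2 : G.Adj w c
    · exact Or.inr (Or.inl hc2)
    by_cases hwb : G.Adj w b
    · exact Or.inr (Or.inr ⟨b, hwb, hbc⟩)
    rcases hb with rfl | h | ⟨a, hwa, hab⟩
    · exact absurd hbc hc2
    · exact absurd h hwb
    · by_cases hac : G.Adj a c
      · exact Or.inr (Or.inr ⟨a, hwa, hac⟩)
      · exact (p4_free hG hwa hab hbc hwb hc2 hac (fun h => hc1 h.symm)).elim
  have key : ∀ v (p : G.Walk v w), v = w ∨ G.Adj w v ∨ ∃ a, G.Adj w a ∧ G.Adj a v := by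
    intro v p
    induction p with
    | nil => exact Or.inl rfl
    | cons h q ih => exact step _ _ h.symm (ih step)
  have dist2 : ∀ v, G.Reachable w v → v = w ∨ G.Adj w v ∨ ∃ a, G.Adj w a ∧ G.Adj a v := by
    intro v hv
    obtain ⟨p⟩ := hv.symm
    exact key v p
  by_cases hA : ∃ a, G.Adj w a
  case neg =>
    refine ⟨{w}, by simp, ?_⟩
    intro v hv
    rcases dist2 v hv with rfl | h | ⟨a, hwa, _⟩
    · exact Or.inl (by simp)
    · exact Or.inr ⟨w, by simp, h⟩
    · exact absurd ⟨a, hwa⟩ hA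
  case pos =>
    obtain ⟨a0, ha0⟩ := hA
    set A : Finset V := Finset.univ.filter (fun x => G.Adj w x) with hAdef
    have hAne : A.Nonempty := ⟨a0, by simp [hAdef, ha0]⟩
    set B : V → Finset V :=
      fun x => Finset.univ.filter (fun b => G.Adj x b ∧ ¬ G.Adj w b ∧ b ≠ w) with hBdef
    obtain ⟨a, haA, hamax⟩ := Finset.exists_max_image A (fun x => (B x).card) hAne
    have haw : G.Adj w a := by simpa [hAdef] using haA
    have hsub : ∀ a', G.Adj w a' → ∀ b' ∈ B a', b' ∈ B a := by
      intro a' hwa' b' hb'mem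
      by_contra hnb
      have hb' : G.Adj a' b' ∧ ¬ G.Adj w b' ∧ b' ≠ w := by
        simpa [hBdef] using hb'mem
      obtain ⟨ha'b', hwb', hb'w⟩ := hb'
      have hab' : ¬ G.Adj a b' := fun h =>
        hnb (by simp [hBdef, h, hwb', hb'w])
      have hcard : (B a').card ≤ (B a).card := hamax a' (by simp [hAdef, hwa'])
      have hex : ∃ b ∈ B a, b ∉ B a' := by
        by_contra hs
        push_neg at hs
        have h1 : B a ⊂ B a' :=
          (Finset.ssubset_iff_of_subset hs).mpr ⟨b', hb'mem, hnb⟩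
        exact absurd hcard (not_le.mpr (Finset.card_lt_card h1))
      obtain ⟨b, hbBa, hbnBa'⟩ := hex
      have hb : G.Adj a b ∧ ¬ G.Adj w b ∧ b ≠ w := by simpa [hBdef] using hbBa
      obtain ⟨hab, hwb, hbw⟩ := hb
      have ha'b : ¬ G.Adj a' b := fun h => hbnBa' (by simp [hBdef, h, hwb, hbw])
      have hba' : b ≠ a' := fun h => hwb (h ▸ hwa')
      have haa' : G.Adj a a' := by
        by_contra haa'
        exact p4_free hG hab.symm haw.symm hwa'
          (fun h => hwb h.symm) (fun h => ha'b h.symm) haa' hba'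
      have hbb' : G.Adj b b' := by
        by_contra hbb'
        have hbb'ne : b ≠ b' := fun h => hab' (h ▸ hab)
        exact p4_free hG hab.symm haa' ha'b'
          (fun h => ha'b h.symm) hbb' hab' hbb'ne
      exact p4_free hG haw hab hbb' hwb hwb' hab' (fun h => hb'w h.symm)
    refine ⟨{w, a}, ?_, ?_⟩
    · exact le_trans (Finset.card_insert_le _ _) (by simp)
    · intro v hv
      by_cases hvw : v = w
      · exact Or.inl (by simp [hvw])
      by_cases hwv : G.Adj w v
      · exact Or.inr ⟨w, by simp, hwv⟩
      rcases dist2 v hv with h | h | ⟨a', hwa', ha'v⟩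
      · exact absurd h hvw
      · exact absurd h hwv
      · have hvB : v ∈ B a' := by simp [hBdef, ha'v, hwv, hvw]
        have hvBa : v ∈ B a := hsub a' hwa' v hvB
        have h' : G.Adj a v ∧ ¬ G.Adj w v ∧ v ≠ w := by simpa [hBdef] using hvBa
        exact Or.inr ⟨a, by simp, h'.1⟩

theorem cograph_one_two_domination {V : Type*} [Fintype V] (G : SimpleGraph V)
    (hG : IsCograph G) :
    ∃ S : Finset V, IsDomSet G ↑S ∧ S.card = domNum G ∧
      ∀ v ∉ S, ({u | u ∈ S ∧ G.Adj u v} : Set V).ncard ≤ 2 := by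
  classical
  have hne : {n | ∃ S : Finset V, IsDomSet G ↑S ∧ S.card = n}.Nonempty :=
    ⟨_, Finset.univ, fun v => Or.inl (by simp), rfl⟩
  obtain ⟨Γ, hΓdom, hΓcard⟩ := Nat.sInf_mem hne
  refine ⟨Γ, hΓdom, hΓcard, ?_⟩
  intro w hw
  by_contra hcon
  push_neg at hcon
  set F : Finset V := Finset.univ.filter (fun u => u ∈ Γ ∧ G.Adj u w) with hFdef
  have hFeq : ({u | u ∈ Γ ∧ G.Adj u w} : Set V) = ↑F := by ext u; simp [hFdef]
  have hF3 : 3 ≤ F.card := by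
    rw [hFeq, Set.ncard_coe_finset] at hcon; omega
  set CF : Finset V := Finset.univ.filter (fun v => G.Reachable w v) with hCFdef
  obtain ⟨D, hD2, hDdom⟩ := comp_dom hG w
  set Γ' : Finset V := (Γ \ CF) ∪ D with hΓ'def
  have hΓ'dom : IsDomSet G ↑Γ' := by
    intro v
    by_cases hv : G.Reachable w v
    · rcases hDdom v hv with h | ⟨u, hu, huv⟩
      · exact Or.inl (by simp [hΓ'def, h])
      · exact Or.inr ⟨u, by simp [hΓ'def, hu], huv⟩
    · rcases hΓdom v with h | ⟨u, hu, huv⟩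
      · refine Or.inl ?_
        simp only [hΓ'def, Finset.coe_union, Set.mem_union, Finset.coe_sdiff,
          Set.mem_diff, Finset.mem_coe, Finset.mem_filter, hCFdef]
        exact Or.inl ⟨by simpa using h, by simp [hv]⟩
      · have hu' : ¬ G.Reachable w u := fun hr => hv (hr.trans huv.reachable)
        refine Or.inr ⟨u, ?_, huv⟩
        simp only [hΓ'def, Finset.coe_union, Set.mem_union, Finset.coe_sdiff,
          Set.mem_diff, Finset.mem_coe, Finset.mem_filter, hCFdef]
        exact Or.inl ⟨by simpa using hu, by simp [hu']⟩
  have hFsub : F ⊆ Γ ∩ CF := by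
    intro u hu
    simp only [hFdef, Finset.mem_filter, Finset.mem_univ, true_and] at hu
    simp only [Finset.mem_inter, hCFdef, Finset.mem_filter, Finset.mem_univ, true_and]
    exact ⟨hu.1, (hu.2.reachable).symm⟩
  have h1 : 3 ≤ (Γ ∩ CF).card := le_trans hF3 (Finset.card_le_card hFsub)
  have h2 : (Γ \ CF).card + (Γ ∩ CF).card = Γ.card := Finset.card_sdiff_add_card_inter Γ CF
  have h3 : Γ'.card ≤ (Γ \ CF).card + D.card := Finset.card_union_le _ _
  have h5 : domNum G ≤ Γ'.card := Nat.sInf_le ⟨Γ', hΓ'dom, rfl⟩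
  have h6 : Γ.card = domNum G := hΓcard
  omega
end

section
/- Let G be a cograph, Γ = {v1,...,vk} a minimum [1,2]-dominating set of G, and suppose vi is adjacent to v_{j1} for some j1 ≠ i, and u is a private neighbor of vi with respect to Γ. If u is adjacent to a private neighbor u' of v_{j2} for some j2 ∉ {i, j1}, then G contains an induced P4. Hence u has no neighbor among private neighbors of vertices of Γ other than vi and v_{j1}. -/
open SimpleGraph

theorem private_no_far_private_neighbor {V : Type*} [Fintype V] (G : SimpleGraph V)
    (hG : IsCograph G) (Γ : Finset V) (hΓ : IsMinDomSet G Γ)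
    (h12 : ∀ v ∉ Γ, ({u | u ∈ Γ ∧ G.Adj u v} : Set V).ncard ≤ 2)
    (vi vj₁ : V) (hvi : vi ∈ Γ) (hvj₁ : vj₁ ∈ Γ) (hne : vj₁ ≠ vi)
    (hadj : G.Adj vi vj₁) (u : V) (hu : PrivNbr G ↑Γ vi u) :
    ∀ vj₂ ∈ Γ, vj₂ ≠ vi → vj₂ ≠ vj₁ →
      ∀ u', PrivNbr G ↑Γ vj₂ u' → ¬ G.Adj u u' := by
  intro vj₂ hvj₂ hne₂i hne₂₁ u' hu' huu'
  obtain ⟨hunΓ, hviu, hupriv⟩ := hu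
  obtain ⟨hu'nΓ, hvj₂u', hu'priv⟩ := hu'
  -- distinctness
  have huvi : u ≠ vi := fun h => hunΓ (h ▸ hvi)
  have huvj₁ : u ≠ vj₁ := fun h => hunΓ (h ▸ hvj₁)
  have hu'vi : u' ≠ vi := fun h => hu'nΓ (h ▸ hvi)
  have hu'vj₁ : u' ≠ vj₁ := fun h => hu'nΓ (h ▸ hvj₁)
  have huu'ne : u ≠ u' := G.ne_of_adj huu'
  -- non-edges
  have hnvj₁u : ¬ G.Adj vj₁ u := fun h => hne (hupriv vj₁ hvj₁ h)
  have hnviu' : ¬ G.Adj vi u' := fun h => hne₂i (hu'priv vi hvi h).symm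
  have hnvj₁u' : ¬ G.Adj vj₁ u' := fun h => hne₂₁ (hu'priv vj₁ hvj₁ h).symm
  apply hG
  clear h12 hΓ
  have hinj : Function.Injective ![vj₁, vi, u, u'] := by
    intro a b hab
    fin_cases a <;> fin_cases b <;>
      simp only [Matrix.cons_val_zero, Matrix.cons_val_one, Matrix.head_cons,
        Matrix.cons_val_two, Matrix.tail_cons, Matrix.cons_val_three,
        Matrix.cons_val_fin_one] at hab <;>
      first
        | rfl
        | exact absurd hab hne
        | exact absurd hab hne.symm
        | exact absurd hab huvi.symm
        | exact absurd hab huvi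
        | exact absurd hab huvj₁.symm
        | exact absurd hab huvj₁
        | exact absurd hab hu'vi.symm
        | exact absurd hab hu'vi
        | exact absurd hab hu'vj₁.symm
        | exact absurd hab hu'vj₁
        | exact absurd hab huu'ne
        | exact absurd hab huu'ne.symm
  have hnuvj₁ : ¬ G.Adj u vj₁ := fun h => hnvj₁u h.symm
  have hnu'vi : ¬ G.Adj u' vi := fun h => hnviu' h.symm
  have hnu'vj₁ : ¬ G.Adj u' vj₁ := fun h => hnvj₁u' h.symm
  refine ⟨⟨![vj₁, vi, u, u'], hinj⟩, ?_⟩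
  intro a b
  fin_cases a <;> fin_cases b <;>
    simp [pathGraph_adj, hadj, hadj.symm, hviu, hviu.symm, huu', huu'.symm,
      hnvj₁u, hnviu', hnvj₁u', hnuvj₁, hnu'vi, hnu'vj₁] <;> decide
end

section
/- Let G be a cograph with minimum dominating set Γ containing v_{j1}, v_{j2}, suppose both v_{j1} and v_{j2} have no private neighbors with respect to Γ, and let P_{j1,j2} be the set of vertices outside Γ whose neighbors in Γ are exactly {v_{j1}, v_{j2}}. If some vertex w ∈ P_{j1,j2} is adjacent to all other vertices of P_{j1,j2}, then (Γ − {v_{j1}, v_{j2}}) ∪ {w} dominates G, contradicting minimality. Hence if P_{j1,j2} ≠ ∅, no vertex of P_{j1,j2} is adjacent to all others in P_{j1,j2} ∪ {v_{j1}, v_{j2}} unless |Γ| is not minimum. -/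
open SimpleGraph

theorem shared_no_universal_vertex {V : Type*} [Fintype V] (G : SimpleGraph V)
    (Γ : Finset V) (hΓ : IsMinDomSet G Γ) (vj₁ vj₂ : V)
    (hv₁ : vj₁ ∈ Γ) (hv₂ : vj₂ ∈ Γ) (hne : vj₁ ≠ vj₂)
    (hP1 : ¬ ∃ x, PrivNbr G ↑Γ vj₁ x) (hP2 : ¬ ∃ x, PrivNbr G ↑Γ vj₂ x) :
    ∀ w, SharedNbr G ↑Γ vj₁ vj₂ w →
      ¬ (∀ x, SharedNbr G ↑Γ vj₁ vj₂ x → x ≠ w → G.Adj w x) := by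
  classical
  rintro w hw huniv
  obtain ⟨hdomΓ, hcard⟩ := hΓ
  obtain ⟨hwΓ, hwadj⟩ := hw
  set Γ' : Finset V := insert w ((Γ.erase vj₁).erase vj₂) with hΓ'
  have hwΓ' : w ∉ Γ := fun h => hwΓ (Finset.mem_coe.mpr h)
  have hwadj1 : G.Adj vj₁ w := (hwadj vj₁ (by exact_mod_cast hv₁)).2 (Or.inl rfl)
  have hwadj2 : G.Adj vj₂ w := (hwadj vj₂ (by exact_mod_cast hv₂)).2 (Or.inr rfl)
  have hdom' : IsDomSet G ↑Γ' := by
    intro v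
    by_cases hvw : v = w
    · exact Or.inl (by simp [hΓ', hvw])
    by_cases hv1 : v = vj₁
    · exact Or.inr ⟨w, by simp [hΓ'], by rw [hv1]; exact hwadj1.symm⟩
    by_cases hv2 : v = vj₂
    · exact Or.inr ⟨w, by simp [hΓ'], by rw [hv2]; exact hwadj2.symm⟩
    by_cases hvΓ : v ∈ Γ
    · exact Or.inl (by simp [hΓ', Finset.mem_erase, hv1, hv2, hvΓ])
    · have hvΓc : v ∉ (↑Γ : Set V) := fun h => hvΓ (Finset.mem_coe.mp h)
      by_cases hother : ∃ u ∈ Γ, u ≠ vj₁ ∧ u ≠ vj₂ ∧ G.Adj u v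
      · obtain ⟨u, huΓ, hu1, hu2, huadj⟩ := hother
        exact Or.inr ⟨u, by simp [hΓ', Finset.mem_erase, hu1, hu2, huΓ], huadj⟩
      · push_neg at hother
        rcases hdomΓ v with h | ⟨u, huΓ, huadj⟩
        · exact absurd h hvΓc
        have huΓ' : u ∈ Γ := Finset.mem_coe.mp huΓ
        have hu12 : u = vj₁ ∨ u = vj₂ := by
          by_contra hc
          push_neg at hc
          exact (hother u huΓ' hc.1 hc.2) huadj
        by_cases hadj1 : G.Adj vj₁ v
        · by_cases hadj2 : G.Adj vj₂ v
          · have hvs : SharedNbr G ↑Γ vj₁ vj₂ v := by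
              refine ⟨hvΓc, fun u' hu' => ⟨fun ha => ?_, fun h12 => ?_⟩⟩
              · by_contra hc
                push_neg at hc
                exact (hother u' (Finset.mem_coe.mp hu') hc.1 hc.2) ha
              · rcases h12 with rfl | rfl
                · exact hadj1
                · exact hadj2
            exact Or.inr ⟨w, by simp [hΓ'], huniv v hvs hvw⟩
          · refine absurd ⟨v, hvΓc, hadj1, fun u' hu' ha => ?_⟩ hP1
            by_contra hc
            rcases eq_or_ne u' vj₂ with rfl | h2
            · exact hadj2 ha
            · exact (hother u' (Finset.mem_coe.mp hu') hc h2) ha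
        · have hadj2 : G.Adj vj₂ v := by
            rcases hu12 with rfl | rfl
            · exact absurd huadj hadj1
            · exact huadj
          refine absurd ⟨v, hvΓc, hadj2, fun u' hu' ha => ?_⟩ hP2
          by_contra hc
          rcases eq_or_ne u' vj₁ with rfl | h1
          · exact hadj1 ha
          · exact (hother u' (Finset.mem_coe.mp hu') h1 hc) ha
  have hcard2 : 2 ≤ Γ.card := Finset.one_lt_card.mpr ⟨vj₁, hv₁, vj₂, hv₂, hne⟩
  have hv₂e : vj₂ ∈ Γ.erase vj₁ := Finset.mem_erase.mpr ⟨hne.symm, hv₂⟩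
  have hcard' : Γ'.card = Γ.card - 1 := by
    rw [hΓ', Finset.card_insert_of_notMem
      (fun h => hwΓ' (Finset.mem_of_mem_erase (Finset.mem_of_mem_erase h))),
      Finset.card_erase_of_mem hv₂e, Finset.card_erase_of_mem hv₁]
    omega
  have hle : domNum G ≤ Γ'.card := Nat.sInf_le ⟨Γ', hdom', rfl⟩
  omega
end
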